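/- arXiv:1912.03636 — 2 statements merged into one kernel-verified Lean document; each statement's English description precedes it below -/
import Mathlib

section
/- Under the covariate-adaptive randomization with allocation function g_n, if the n-th patient falls in stratum t, then M_n − M_{n−1} = 2Λ_{n−1}(t)(2T_n − 1) + 1, and consequently E[M_n | 𝓕_{n−1}] − M_{n−1} = 1 − 4·Σ_t |Λ_{n−1}(t)|·|1/2 − g_n(4Λ_{n−1}(t))|·p(t), provided g_n(x) ≤ 1/2 ≤ g_n(−x) for x ≥ 0. -/
open Finset MeasureTheory

/-- The set of strata: one level for each of the `I` covariates. -/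
abbrev Strata (I : ℕ) (m : Fin I → ℕ) := (i : Fin I) → Fin (m i)

/-- Marginal sum of a stratum-indexed array over all coordinates except the `i`-th. -/
noncomputable def marg {I : ℕ} {m : Fin I → ℕ} (D : Strata I m → ℝ) (i : Fin I)
    (ti : Fin (m i)) : ℝ :=
  ∑ s ∈ Finset.univ.filter (fun s : Strata I m => s i = ti), D s

/-- Total sum of a stratum-indexed array. -/
noncomputable def tot {I : ℕ} {m : Fin I → ℕ} (D : Strata I m → ℝ) : ℝ := ∑ s, D s

/-- Weighted imbalance `Λ(t) = w_o·D + Σ_i w_{m,i}·D(i;t_i) + w_s·D(t)`. -/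
noncomputable def lam {I : ℕ} {m : Fin I → ℕ} (wo ws : ℝ) (wm : Fin I → ℝ)
    (D : Strata I m → ℝ) (t : Strata I m) : ℝ :=
  wo * tot D + (∑ i, wm i * marg D i (t i)) + ws * D t

/-- The weighted imbalance measure
`M_n = Σ_t w_s D(t)² + Σ_i Σ_{t_i} w_{m,i} D(i;t_i)² + w_o D²`. -/
noncomputable def Mimb {I : ℕ} {m : Fin I → ℕ} (wo ws : ℝ) (wm : Fin I → ℝ)
    (D : Strata I m → ℝ) : ℝ :=
  ws * (∑ t, (D t)^2) + (∑ i, ∑ ti : Fin (m i), wm i * (marg D i ti)^2) + wo * (tot D)^2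

/-!
Adding a patient to stratum `t` with sign `c = 2T - 1 = ±1` shifts `D(t)`, each marginal
`D(i; t_i)` and the total `D` by `c`, so each of these squares in `M` grows by
`2c·(old value) + c² = 2c·(old value) + 1`;
weighting and summing gives `M_n - M_{n-1} = 2cΛ(t) + 1` because the weights sum to `1`.
Given the stratum, `E[c] = 2g(4Λ(t)) - 1`, and the sign condition on `g` makes
`Λ(t)·(g(4Λ(t)) - 1/2) = -|Λ(t)|·|1/2 - g(4Λ(t))|`.
-/

section FiniteValued

variable {Ω α : Type*} {κ : Ω → α} {T : Ω → ℝ}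

theorem comp_mul_two_mul_sub_one_eq_indicator (hT01 : ∀ ω, T ω = 0 ∨ T ω = 1) (f : α → ℝ) :
    (fun ω => f (κ ω) * (2 * T ω - 1))
      = fun ω => 2 * (T ⁻¹' {1}).indicator (fun ω => f (κ ω)) ω - f (κ ω) := by
  ext ω
  rcases hT01 ω with h | h <;> simp [h]
  ring

variable [MeasurableSpace Ω] [Fintype α] [MeasurableSpace α] [MeasurableSingletonClass α]
  {μ : Measure Ω} [IsFiniteMeasure μ]

theorem integrable_comp_of_fintype (hκ : Measurable κ) (f : α → ℝ) :
    Integrable (fun ω => f (κ ω)) μ :=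
  Integrable.of_finite.comp_measurable hκ

theorem integral_comp_of_fintype (hκ : Measurable κ) (f : α → ℝ) :
    ∫ ω, f (κ ω) ∂μ = ∑ t, μ.real (κ ⁻¹' {t}) * f t := by
  rw [← integral_map hκ.aemeasurable .of_discrete, integral_fintype .of_finite]
  simp only [map_measureReal_apply hκ (measurableSet_singleton _), smul_eq_mul]

theorem integrable_comp_mul_two_mul_sub_one (hκ : Measurable κ) (hT : Measurable T)
    (hT01 : ∀ ω, T ω = 0 ∨ T ω = 1) (f : α → ℝ) :
    Integrable (fun ω => f (κ ω) * (2 * T ω - 1)) μ := by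
  rw [comp_mul_two_mul_sub_one_eq_indicator hT01]
  exact (((integrable_comp_of_fintype hκ f).indicator (hT (measurableSet_singleton 1))).const_mul
    2).sub (integrable_comp_of_fintype hκ f)

theorem integral_comp_mul_two_mul_sub_one (hκ : Measurable κ) (hT : Measurable T)
    (hT01 : ∀ ω, T ω = 0 ∨ T ω = 1) (f : α → ℝ) :
    ∫ ω, f (κ ω) * (2 * T ω - 1) ∂μ
      = ∑ t, f t * (2 * μ.real {ω | T ω = 1 ∧ κ ω = t} - μ.real (κ ⁻¹' {t})) := by
  have hS : MeasurableSet (T ⁻¹' {1}) := hT (measurableSet_singleton 1)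
  have hfiber : ∀ t, (μ.restrict (T ⁻¹' {1})).real (κ ⁻¹' {t})
      = μ.real {ω | T ω = 1 ∧ κ ω = t} := fun t => by
    rw [measureReal_restrict_apply (hκ (measurableSet_singleton t)), Set.inter_comm]
    rfl
  rw [comp_mul_two_mul_sub_one_eq_indicator hT01,
    integral_sub (((integrable_comp_of_fintype hκ f).indicator hS).const_mul 2)
      (integrable_comp_of_fintype hκ f),
    integral_const_mul, integral_indicator hS, integral_comp_of_fintype hκ,
    integral_comp_of_fintype hκ, Finset.mul_sum, ← Finset.sum_sub_distrib]
  simp only [hfiber]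
  exact Finset.sum_congr rfl fun t _ => by ring

end FiniteValued

theorem sum_add_mul_ite_sq {α : Type*} [Fintype α] [DecidableEq α] (f : α → ℝ) (c : ℝ) (b : α) :
    ∑ a, (f a + c * if b = a then 1 else 0) ^ 2 = ∑ a, f a ^ 2 + (2 * c * f b + c ^ 2) := by
  have h : ∀ a, (f a + c * if b = a then 1 else 0) ^ 2
      = f a ^ 2 + if b = a then 2 * c * f a + c ^ 2 else 0 := fun a => by
    split_ifs <;> ring
  simp only [h, Finset.sum_add_distrib, Finset.sum_ite_eq, Finset.mem_univ, if_true]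

section Imbalance

variable {I : ℕ} {m : Fin I → ℕ} (D : Strata I m → ℝ) (c : ℝ) (t : Strata I m)

theorem tot_add_mul_ite :
    tot (fun s => D s + c * if t = s then 1 else 0) = tot D + c := by
  simp only [tot, mul_ite, mul_one, mul_zero, Finset.sum_add_distrib, Finset.sum_ite_eq,
    Finset.mem_univ, if_true]

theorem marg_add_mul_ite (i : Fin I) (ti : Fin (m i)) :
    marg (fun s => D s + c * if t = s then 1 else 0) i ti
      = marg D i ti + c * if t i = ti then 1 else 0 := by
  simp only [marg, mul_ite, mul_one, mul_zero, Finset.sum_add_distrib, Finset.sum_ite_eq,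
    Finset.mem_filter, Finset.mem_univ, true_and]

theorem Mimb_add_mul_ite (wo ws : ℝ) (wm : Fin I → ℝ) :
    Mimb wo ws wm (fun s => D s + c * if t = s then 1 else 0)
      = Mimb wo ws wm D + 2 * c * lam wo ws wm D t + c ^ 2 * (wo + ws + ∑ i, wm i) := by
  simp only [Mimb, lam, tot_add_mul_ite, marg_add_mul_ite, ← Finset.mul_sum, sum_add_mul_ite_sq,
    mul_add, Finset.sum_add_distrib]
  simp only [Finset.mul_sum]
  ring_nf

end Imbalance

theorem mul_sub_half_eq_neg_abs_mul_abs {g : ℝ → ℝ}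
    (hg : ∀ x : ℝ, 0 ≤ x → g x ≤ 1/2 ∧ 1/2 ≤ g (-x)) {c : ℝ} (hc : 0 ≤ c) (x : ℝ) :
    x * (g (c * x) - 1/2) = -(|x| * |1/2 - g (c * x)|) := by
  have hnonneg : 0 ≤ x * (1/2 - g (c * x)) := by
    rcases le_total 0 x with hx | hx
    · exact mul_nonneg hx (by linarith [(hg (c * x) (mul_nonneg hc hx)).1])
    · have := (hg (-(c * x)) (neg_nonneg.2 (mul_nonpos_of_nonneg_of_nonpos hc hx))).2
      rw [neg_neg] at this
      exact mul_nonneg_of_nonpos_of_nonpos hx (by linarith)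
  rw [← abs_mul, abs_of_nonneg hnonneg]
  ring

theorem stmt10_general {Ω : Type*} [MeasurableSpace Ω] (μ : Measure Ω) [IsProbabilityMeasure μ]
    (I : ℕ) (m : Fin I → ℕ)
    (wo ws : ℝ) (wm : Fin I → ℝ)
    (hsum : wo + ws + ∑ i, wm i = 1)
    (D : Strata I m → ℝ)
    (κ : Ω → Strata I m) (hκ : Measurable κ)
    (T : Ω → ℝ) (hT : Measurable T) (hT01 : ∀ ω, T ω = 0 ∨ T ω = 1)
    (g : ℝ → ℝ)
    (hg : ∀ x : ℝ, 0 ≤ x → g x ≤ 1/2 ∧ 1/2 ≤ g (-x))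
    (p : Strata I m → ℝ) (hp : ∀ t, (μ (κ ⁻¹' {t})).toReal = p t)
    (hjoint : ∀ t, (μ {ω | T ω = 1 ∧ κ ω = t}).toReal = g (4 * lam wo ws wm D t) * p t) :
    (∀ ω (t : Strata I m), κ ω = t →
      Mimb wo ws wm (fun s => D s + (2 * T ω - 1) * (if κ ω = s then 1 else 0))
          - Mimb wo ws wm D
        = 2 * lam wo ws wm D t * (2 * T ω - 1) + 1) ∧
    (∫ ω, Mimb wo ws wm (fun s => D s + (2 * T ω - 1) * (if κ ω = s then 1 else 0)) ∂μ)
        - Mimb wo ws wm D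
      = 1 - 4 * ∑ t, |lam wo ws wm D t| * |1/2 - g (4 * lam wo ws wm D t)| * p t := by
  set L := lam wo ws wm D
  have hstep : ∀ ω, Mimb wo ws wm (fun s => D s + (2 * T ω - 1) * if κ ω = s then 1 else 0)
      = Mimb wo ws wm D + 1 + 2 * L (κ ω) * (2 * T ω - 1) := fun ω => by
    have hsq : (2 * T ω - 1) ^ 2 = 1 := by rcases hT01 ω with h | h <;> norm_num [h]
    rw [Mimb_add_mul_ite, hsum, hsq]
    ring
  refine ⟨fun ω t ht => by rw [hstep, ← ht]; ring, ?_⟩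
  simp only [hstep]
  rw [integral_add (integrable_const _)
      (integrable_comp_mul_two_mul_sub_one hκ hT hT01 fun t => 2 * L t),
    integral_const, probReal_univ, one_smul,
    integral_comp_mul_two_mul_sub_one hκ hT hT01 fun t => 2 * L t]
  have hterm : ∀ t, 2 * L t * (2 * μ.real {ω | T ω = 1 ∧ κ ω = t} - μ.real (κ ⁻¹' {t}))
      = -(4 * (|L t| * |1/2 - g (4 * L t)| * p t)) := fun t => by
    rw [measureReal_def, measureReal_def, hp, hjoint]
    linear_combination 4 * p t * mul_sub_half_eq_neg_abs_mul_abs hg zero_le_four (L t)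
  rw [Finset.sum_congr rfl fun t _ => hterm t, Finset.sum_neg_distrib, Finset.mul_sum]
  ring

/-- One step of the covariate-adaptive randomization: if the new patient falls in
stratum `t`, then `M_n − M_{n−1} = 2Λ_{n−1}(t)(2T_n − 1) + 1`, and, provided
`g(x) ≤ 1/2 ≤ g(−x)` for `x ≥ 0`,
`E[M_n | 𝓕_{n−1}] − M_{n−1} = 1 − 4 Σ_t |Λ_{n−1}(t)|·|1/2 − g(4Λ_{n−1}(t))|·p(t)`. -/
theorem stmt10 {Ω : Type*} [MeasurableSpace Ω] (μ : Measure Ω) [IsProbabilityMeasure μ]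
    (I : ℕ) (m : Fin I → ℕ)
    (wo ws : ℝ) (wm : Fin I → ℝ)
    (hwo : 0 ≤ wo) (hws : 0 ≤ ws) (hwm : ∀ i, 0 ≤ wm i)
    (hsum : wo + ws + ∑ i, wm i = 1)
    (D : Strata I m → ℝ)
    (κ : Ω → Strata I m) (hκ : Measurable κ)
    (T : Ω → ℝ) (hT : Measurable T) (hT01 : ∀ ω, T ω = 0 ∨ T ω = 1)
    (g : ℝ → ℝ) (hg01 : ∀ x, 0 ≤ g x ∧ g x ≤ 1)
    (hg : ∀ x : ℝ, 0 ≤ x → g x ≤ 1/2 ∧ 1/2 ≤ g (-x))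
    (p : Strata I m → ℝ) (hp : ∀ t, (μ (κ ⁻¹' {t})).toReal = p t)
    (hjoint : ∀ t, (μ {ω | T ω = 1 ∧ κ ω = t}).toReal = g (4 * lam wo ws wm D t) * p t) :
    (∀ ω (t : Strata I m), κ ω = t →
      Mimb wo ws wm (fun s => D s + (2 * T ω - 1) * (if κ ω = s then 1 else 0))
          - Mimb wo ws wm D
        = 2 * lam wo ws wm D t * (2 * T ω - 1) + 1) ∧
    (∫ ω, Mimb wo ws wm (fun s => D s + (2 * T ω - 1) * (if κ ω = s then 1 else 0)) ∂μ)
        - Mimb wo ws wm D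
      = 1 - 4 * ∑ t, |lam wo ws wm D t| * |1/2 - g (4 * lam wo ws wm D t)| * p t :=
  stmt10_general μ I m wo ws wm hsum D κ hκ T hT hT01 g hg p hp hjoint
end

section
/- Let (M_n) be a nonnegative adapted process with M_0 = 0 and increments satisfying M_n = M_{n−1} + 1 + ξ_n where |ξ_n| ≤ 2√(M_{n−1}) and E[ξ_n | 𝓕_{n−1}] ≤ 0. Then for every positive integer r there is a constant C_r such that E[M_n^{r+1} | 𝓕_{n−1}] − M_{n−1}^{r+1} ≤ C_r (M_{n−1} + 1)^r, and consequently E[M_n^r] ≤ C'_r n^r for all n. -/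
open MeasureTheory

/-!
Write `a = M_{n-1} + 1` and `x = ξ_n`. The bound `|x| ≤ 2√a` gives `x² ≤ 4a` and `x ≤ 2a`, so
multiplying out `(a + x)^(r+1)` one factor at a time, every term except `a^(r+1)` and the linear
term `(r+1) a^r x` is `O(a^r)`. The linear term has nonpositive conditional expectation because
`a^r` is `𝓕_{n-1}`-measurable. Taking expectations, `E[M_n^(r+1)]` grows per step by at most
`C E[(M_{n-1}+1)^r] = O(n^r)` (by induction on `r`, starting from `E[M_n^0] = 1`), and summing the
steps gives `E[M_n^(r+1)] = O(n^(r+1))`.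
-/

lemma add_pow_le_of_sq_le (r : ℕ) : ∃ D : ℝ, 0 ≤ D ∧ ∀ a x : ℝ, 1 ≤ a → x ^ 2 ≤ 4 * a →
    0 ≤ a + x → (a + x) ^ (r + 1) ≤ a ^ (r + 1) + (r + 1) * a ^ r * x + D * a ^ r := by
  induction r with
  | zero => exact ⟨0, le_rfl, fun a x _ _ _ => by simp⟩
  | succ k ih =>
    obtain ⟨D, hD, hle⟩ := ih
    refine ⟨3 * D + 4 * (k + 1), by positivity, fun a x ha hx hax => ?_⟩
    have ha0 : 0 ≤ a := by linarith
    have hxa : x ≤ 2 * a := by nlinarith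
    calc (a + x) ^ (k + 1 + 1) = (a + x) * (a + x) ^ (k + 1) := pow_succ' _ _
      _ ≤ (a + x) * (a ^ (k + 1) + (k + 1) * a ^ k * x + D * a ^ k) :=
        mul_le_mul_of_nonneg_left (hle a x ha hx hax) hax
      _ = a ^ (k + 2) + (k + 2) * a ^ (k + 1) * x + (k + 1) * a ^ k * x ^ 2
          + D * a ^ (k + 1) + D * a ^ k * x := by ring
      _ ≤ a ^ (k + 2) + (k + 2) * a ^ (k + 1) * x + (k + 1) * a ^ k * (4 * a)
          + D * a ^ (k + 1) + D * a ^ k * (2 * a) := by gcongr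
      _ = _ := by push_cast; ring

lemma add_one_add_pow_le_of_abs_le_two_sqrt (r : ℕ) : ∃ C : ℝ, 0 ≤ C ∧ ∀ m x : ℝ, 0 ≤ m →
    |x| ≤ 2 * √m → 0 ≤ m + 1 + x →
    (m + 1 + x) ^ (r + 1) ≤ m ^ (r + 1) + C * (m + 1) ^ r + (r + 1) * (m + 1) ^ r * x := by
  obtain ⟨D, hD, hle⟩ := add_pow_le_of_sq_le r
  refine ⟨D + (r + 1), by positivity, fun m x hm hx hmx => ?_⟩
  have hx2 : x ^ 2 ≤ 4 * (m + 1) := by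
    have := pow_le_pow_left₀ (abs_nonneg x) hx 2
    rw [sq_abs, mul_pow, Real.sq_sqrt hm] at this
    linarith
  have hincr : (m + 1) ^ (r + 1) - m ^ (r + 1) ≤ (r + 1) * (m + 1) ^ r := by
    have := (le_abs_self _).trans (abs_pow_sub_pow_le (m + 1) m (r + 1))
    rwa [add_sub_cancel_left, abs_one, one_mul, abs_of_nonneg (by linarith : 0 ≤ m + 1),
      abs_of_nonneg hm, max_eq_left (by linarith), Nat.add_sub_cancel, Nat.cast_succ] at this
  have := hle (m + 1) x (by linarith) hx2 hmx
  linarith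

lemma le_mul_pow_succ_of_le_add_mul_pow {a : ℕ → ℝ} {K : ℝ} (r : ℕ) (hK : 0 ≤ K)
    (h0 : a 0 ≤ 0) (hstep : ∀ n : ℕ, a (n + 1) ≤ a n + K * (n + 1) ^ r) (n : ℕ) :
    a n ≤ K * n ^ (r + 1) := by
  induction n with
  | zero => simpa using h0
  | succ n ih =>
    have hn : (n : ℝ) ^ (r + 1) ≤ n * (n + 1) ^ r := by
      rw [pow_succ']; gcongr; linarith
    calc a (n + 1) ≤ K * n ^ (r + 1) + K * (n + 1) ^ r := by linarith [hstep n]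
      _ ≤ K * (n * (n + 1) ^ r) + K * (n + 1) ^ r := by gcongr
      _ = K * ((n + 1 : ℕ) : ℝ) ^ (r + 1) := by push_cast; ring

section

variable {Ω : Type*} {mΩ : MeasurableSpace Ω} {μ : Measure Ω}

lemma integrable_add_const_pow {f : Ω → ℝ} (hf : ∀ k : ℕ, Integrable (fun ω => f ω ^ k) μ)
    (c : ℝ) (j : ℕ) : Integrable (fun ω => (f ω + c) ^ j) μ := by
  simp_rw [add_pow]
  exact integrable_finsetSum _ fun k _ => ((hf k).mul_const _).mul_const _

lemma condExp_le_of_le_add_mul {m : MeasurableSpace Ω} (hm : m ≤ mΩ) [SigmaFinite (μ.trim hm)]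
    {Y G H Z : Ω → ℝ} (hG : StronglyMeasurable[m] G) (hH : StronglyMeasurable[m] H)
    (hY : Integrable Y μ) (hGi : Integrable G μ) (hZ : Integrable Z μ)
    (hHZ : Integrable (H * Z) μ) (hH0 : 0 ≤ᵐ[μ] H) (hle : Y ≤ᵐ[μ] G + H * Z)
    (hZc : μ[Z | m] ≤ᵐ[μ] 0) : μ[Y | m] ≤ᵐ[μ] G := by
  have hmono := condExp_mono (m := m) hY (hGi.add hHZ) hle
  have hadd := condExp_add hGi hHZ m
  have hpull := condExp_mul_of_stronglyMeasurable_left (m := m) hH hHZ hZ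
  rw [condExp_of_stronglyMeasurable hm hG hGi] at hadd
  filter_upwards [hmono, hadd, hpull, hH0, hZc] with ω hmono hadd hpull hH0 hZc
  simp only [Pi.add_apply, Pi.mul_apply, Pi.zero_apply] at hmono hadd hpull hH0 hZc
  nlinarith [mul_nonpos_of_nonneg_of_nonpos hH0 hZc]

lemma integral_add_one_pow_le [IsProbabilityMeasure μ] {f : Ω → ℝ} (hf0 : 0 ≤ f)
    (hf : ∀ k : ℕ, Integrable (fun ω => f ω ^ k) μ) (r : ℕ) :
    ∫ ω, (f ω + 1) ^ r ∂μ ≤ 2 ^ (r - 1) * (∫ ω, f ω ^ r ∂μ + 1) := by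
  calc ∫ ω, (f ω + 1) ^ r ∂μ ≤ ∫ ω, 2 ^ (r - 1) * (f ω ^ r + 1 ^ r) ∂μ :=
        integral_mono (integrable_add_const_pow hf 1 r)
          (((hf r).add (integrable_const _)).const_mul _)
          fun ω => add_pow_le (hf0 ω) zero_le_one r
    _ = 2 ^ (r - 1) * (∫ ω, f ω ^ r ∂μ + 1) := by
      rw [integral_const_mul, integral_add (hf r) (integrable_const _)]
      simp

lemma condExp_pow_succ_le_of_sqrt_bounded_increments [IsFiniteMeasure μ]
    (ℱ : Filtration ℕ mΩ) {M ξ : ℕ → Ω → ℝ}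
    (hadapt : ∀ n, StronglyMeasurable[ℱ n] (M n))
    (hξadapt : ∀ n, StronglyMeasurable[ℱ n] (ξ n))
    (hint : ∀ n r : ℕ, Integrable (fun ω => M n ω ^ r) μ)
    (hξint : ∀ n, Integrable (ξ n) μ) (hnn : ∀ n ω, 0 ≤ M n ω)
    (hrec : ∀ n ω, M (n + 1) ω = M n ω + 1 + ξ (n + 1) ω)
    (hbd : ∀ n ω, |ξ (n + 1) ω| ≤ 2 * √(M n ω))
    (hcond : ∀ n, μ[ξ (n + 1) | ℱ n] ≤ᵐ[μ] 0) (r : ℕ) :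
    ∃ C : ℝ, 0 ≤ C ∧ ∀ n, μ[(fun ω => M (n + 1) ω ^ (r + 1)) | ℱ n]
        ≤ᵐ[μ] fun ω => M n ω ^ (r + 1) + C * (M n ω + 1) ^ r := by
  obtain ⟨C, hC, hstep⟩ := add_one_add_pow_le_of_abs_le_two_sqrt r
  refine ⟨C, hC, fun n => ?_⟩
  have hH : StronglyMeasurable[ℱ n] fun ω => (r + 1) * (M n ω + 1) ^ r :=
    (((hadapt n).add_const 1).pow r).const_mul _
  have hHξ : Integrable ((fun ω => (r + 1) * (M n ω + 1) ^ r) * ξ (n + 1)) μ := by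
    refine ((integrable_add_const_pow (hint n) 1 (r + 1)).const_mul (2 * (r + 1))).mono'
      ((hH.mono (ℱ.le n)).aestronglyMeasurable.mul
        ((hξadapt (n + 1)).mono (ℱ.le _)).aestronglyMeasurable) (ae_of_all _ fun ω => ?_)
    have hsqrt : √(M n ω) ≤ M n ω + 1 := by
      nlinarith [Real.sq_sqrt (hnn n ω), Real.sqrt_nonneg (M n ω)]
    have hH0 : 0 ≤ (r + 1) * (M n ω + 1) ^ r := by have := hnn n ω; positivity
    rw [Pi.mul_apply, norm_mul, Real.norm_of_nonneg hH0, Real.norm_eq_abs]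
    calc (r + 1) * (M n ω + 1) ^ r * |ξ (n + 1) ω|
        ≤ (r + 1) * (M n ω + 1) ^ r * (2 * (M n ω + 1)) := by gcongr; linarith [hbd n ω]
      _ = _ := by ring
  refine condExp_le_of_le_add_mul (ℱ.le n) ?_ hH (hint _ _) ?_ (hξint _) hHξ
    (ae_of_all _ fun ω => ?_) (ae_of_all _ fun ω => ?_) (hcond n)
  · exact ((hadapt n).pow _).add ((((hadapt n).add_const 1).pow r).const_mul C)
  · exact (hint n _).add ((integrable_add_const_pow (hint n) 1 r).const_mul C)
  · have := hnn n ω; simp only [Pi.zero_apply]; positivity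
  · have := hstep (M n ω) (ξ (n + 1) ω) (hnn n ω) (hbd n ω) (hrec n ω ▸ hnn (n + 1) ω)
    simp only [Pi.add_apply, Pi.mul_apply]
    rw [hrec]
    linarith

lemma integral_pow_le_of_condExp_drift [IsProbabilityMeasure μ] (ℱ : Filtration ℕ mΩ)
    {M : ℕ → Ω → ℝ} (hint : ∀ n r : ℕ, Integrable (fun ω => M n ω ^ r) μ)
    (hnn : ∀ n ω, 0 ≤ M n ω) (h0 : ∀ ω, M 0 ω = 0)
    (hdrift : ∀ r : ℕ, ∃ C : ℝ, 0 ≤ C ∧ ∀ n, μ[(fun ω => M (n + 1) ω ^ (r + 1)) | ℱ n]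
        ≤ᵐ[μ] fun ω => M n ω ^ (r + 1) + C * (M n ω + 1) ^ r) (r : ℕ) :
    ∃ C' : ℝ, 0 ≤ C' ∧ ∀ n : ℕ, ∫ ω, M n ω ^ r ∂μ ≤ C' * (n : ℝ) ^ r := by
  induction r with
  | zero => exact ⟨1, zero_le_one, fun n => by simp⟩
  | succ r ih =>
    obtain ⟨C', hC', hmom⟩ := ih
    obtain ⟨C, hC, hcond⟩ := hdrift r
    refine ⟨C * (2 ^ (r - 1) * (C' + 1)), by positivity,
      le_mul_pow_succ_of_le_add_mul_pow r (by positivity) (by simp [h0]) fun n => ?_⟩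
    have hint_drift : ∫ ω, M (n + 1) ω ^ (r + 1) ∂μ
        ≤ ∫ ω, M n ω ^ (r + 1) ∂μ + C * ∫ ω, (M n ω + 1) ^ r ∂μ := by
      have hGi := (integrable_add_const_pow (hint n) 1 r).const_mul C
      rw [← integral_condExp (ℱ.le n), ← integral_const_mul, ← integral_add (hint n _) hGi]
      exact integral_mono_ae integrable_condExp ((hint n _).add hGi) (hcond n)
    have hshift : ∫ ω, (M n ω + 1) ^ r ∂μ ≤ 2 ^ (r - 1) * (C' + 1) * (n + 1) ^ r := by
      have h1 : (1 : ℝ) ≤ (n + 1) ^ r := one_le_pow₀ (by linarith [n.cast_nonneg (α := ℝ)])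
      calc ∫ ω, (M n ω + 1) ^ r ∂μ ≤ 2 ^ (r - 1) * (∫ ω, M n ω ^ r ∂μ + 1) :=
            integral_add_one_pow_le (hnn n) (hint n) r
        _ ≤ 2 ^ (r - 1) * (C' * (n + 1) ^ r + (n + 1) ^ r) := by
            gcongr
            exact (hmom n).trans (by gcongr; linarith)
        _ = 2 ^ (r - 1) * (C' + 1) * (n + 1) ^ r := by ring
    calc ∫ ω, M (n + 1) ω ^ (r + 1) ∂μ
        ≤ ∫ ω, M n ω ^ (r + 1) ∂μ + C * (2 ^ (r - 1) * (C' + 1) * (n + 1) ^ r) := by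
          have := mul_le_mul_of_nonneg_left hshift hC
          linarith
      _ = _ := by ring

end

/-- If `M_n = M_{n−1} + 1 + ξ_n` with `|ξ_n| ≤ 2√(M_{n−1})` and `E[ξ_n | 𝓕_{n−1}] ≤ 0`,
then for each integer `r ≥ 1` there is a constant `C_r` with
`E[M_n^{r+1} | 𝓕_{n−1}] − M_{n−1}^{r+1} ≤ C_r (M_{n−1}+1)^r`, and consequently
`E[M_n^r] ≤ C'_r n^r`. -/
theorem stmt12 {Ω : Type*} {mΩ : MeasurableSpace Ω} (μ : Measure Ω) [IsProbabilityMeasure μ]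
    (ℱ : Filtration ℕ mΩ) (M ξ : ℕ → Ω → ℝ)
    (hadapt : ∀ n, StronglyMeasurable[ℱ n] (M n))
    (hξadapt : ∀ n, StronglyMeasurable[ℱ n] (ξ n))
    (hint : ∀ n r : ℕ, Integrable (fun ω => M n ω ^ r) μ)
    (hξint : ∀ n, Integrable (ξ n) μ)
    (hnn : ∀ n ω, 0 ≤ M n ω) (h0 : ∀ ω, M 0 ω = 0)
    (hrec : ∀ n ω, M (n+1) ω = M n ω + 1 + ξ (n+1) ω)
    (hbd : ∀ n ω, |ξ (n+1) ω| ≤ 2 * Real.sqrt (M n ω))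
    (hcond : ∀ n, μ[ξ (n+1) | ℱ n] ≤ᵐ[μ] 0) :
    ∀ r : ℕ, 0 < r →
      (∃ C : ℝ, ∀ n, μ[(fun ω => M (n+1) ω ^ (r+1)) | ℱ n]
          ≤ᵐ[μ] fun ω => M n ω ^ (r+1) + C * (M n ω + 1) ^ r) ∧
      (∃ C' : ℝ, ∀ n : ℕ, ∫ ω, M n ω ^ r ∂μ ≤ C' * (n:ℝ) ^ r) := by
  have hdrift := condExp_pow_succ_le_of_sqrt_bounded_increments ℱ hadapt hξadapt hint hξint hnn
    hrec hbd hcond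
  intro r _
  obtain ⟨C, -, hC⟩ := hdrift r
  obtain ⟨C', -, hC'⟩ := integral_pow_le_of_condExp_drift ℱ hint hnn h0 hdrift r
  exact ⟨⟨C, hC⟩, ⟨C', hC'⟩⟩
end
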